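/- Let P be an orthomodular poset of finite height and x, y ∈ P with x ⊥ y (i.e. x ≤ y'). Then for every a ∈ x → y and every u ∈ a → y, u is the least upper bound of {x, y}; in particular x ≤ u, y ≤ u, and every common upper bound z of x and y satisfies u ≤ z (the validity of axioms (O7) and (O8) for the assigned implication). -/

import Mathlib

/-- An orthomodular poset: a bounded poset with an antitone involution `compl`
that is a complementation (⊤ is the LUB and ⊥ the GLB of `{x, compl x}`),
in which joins of orthogonal pairs exist, satisfying the orthomodular law. -/
structure OrthomodularPoset (P : Type*) [PartialOrder P] [BoundedOrder P] where
  compl : P → P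
  antitone : ∀ x y : P, x ≤ y → compl y ≤ compl x
  involution : ∀ x : P, compl (compl x) = x
  lub_compl : ∀ x : P, IsLUB {x, compl x} ⊤
  glb_compl : ∀ x : P, IsGLB {x, compl x} ⊥
  join_of_orth : ∀ x y : P, x ≤ compl y → ∃ j : P, IsLUB {x, y} j
  orthomodular : ∀ x y j k : P, x ≤ y → IsLUB {compl y, x} j →
    IsLUB {compl j, x} k → k = y

/-- A poset is of finite height if every chain is finite. -/
def FiniteHeight (P : Type*) [PartialOrder P] : Prop :=
  ∀ C : Set P, IsChain (· ≤ ·) C → C.Finite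

/-- `Max A`: the set of maximal elements of `A`. -/
def maxElems {P : Type*} [PartialOrder P] (A : Set P) : Set P :=
  {m | m ∈ A ∧ ∀ x ∈ A, m ≤ x → m = x}

/-- The implication operator: `x → y := {y ∨ m | m ∈ Max L(x', y')}`,
where `y ∨ m` is expressed via `IsLUB`. -/
def ompImpl {P : Type*} [PartialOrder P] [BoundedOrder P] (O : OrthomodularPoset P)
    (x y : P) : Set P :=
  {z | ∃ m ∈ maxElems (lowerBounds {O.compl x, O.compl y}), IsLUB {y, m} z}

/-!
Write `a = y ∨ m` with `m` maximal in `L(x', y')`. For any upper bound `z` of `a` and `x`, the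
element `z' ∨ m` again lies in `L(x', y')`, so maximality forces `z' ≤ m ≤ z` and hence `z = 1`;
thus `a ∨ x = 1`. When `x ⊥ y` we also have `x ≤ a'`, and the orthomodular law applied to
`x ≤ a'` yields `x = a'`. Then `L(a', y') = L(x, y')` has the single maximal element `x`, so
`a → y = {y ∨ x}`.
-/

theorem isLUB_pair_iff {P : Type*} [PartialOrder P] {a b c : P} :
    IsLUB {a, b} c ↔ a ≤ c ∧ b ≤ c ∧ ∀ z, a ≤ z → b ≤ z → c ≤ z := by
  simp [IsLUB, IsLeast, upperBounds_insert, lowerBounds, and_assoc]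

theorem mem_lowerBounds_pair {P : Type*} [PartialOrder P] {a b z : P} :
    z ∈ lowerBounds {a, b} ↔ z ≤ a ∧ z ≤ b := by
  simp [lowerBounds_insert]

theorem eq_of_mem_maxElems_lowerBounds_pair {P : Type*} [PartialOrder P] {a b m : P}
    (hm : m ∈ maxElems (lowerBounds {a, b})) (hab : a ≤ b) : m = a :=
  hm.2 a (mem_lowerBounds_pair.2 ⟨le_rfl, hab⟩) (mem_lowerBounds_pair.1 hm.1).1

namespace OrthomodularPoset

variable {P : Type*} [PartialOrder P] [BoundedOrder P] (O : OrthomodularPoset P)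

theorem le_compl_comm {x y : P} : x ≤ O.compl y ↔ y ≤ O.compl x :=
  ⟨fun h => by simpa only [O.involution] using O.antitone _ _ h,
    fun h => by simpa only [O.involution] using O.antitone _ _ h⟩

theorem compl_top : O.compl ⊤ = ⊥ :=
  le_bot_iff.1 <| (O.glb_compl ⊤).2 <| by simp [lowerBounds_insert]

theorem eq_top_of_compl_le {z : P} (h : O.compl z ≤ z) : z = ⊤ :=
  top_le_iff.1 <| (O.lub_compl z).2 <| by simp [upperBounds_insert, h]

theorem isLUB_top_of_mem_ompImpl {x y a : P} (ha : a ∈ ompImpl O x y) : IsLUB {a, x} ⊤ := by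
  obtain ⟨m, ⟨hmL, hmMax⟩, hma⟩ := ha
  obtain ⟨hmx, hmy⟩ := mem_lowerBounds_pair.1 hmL
  obtain ⟨hya, hma, -⟩ := isLUB_pair_iff.1 hma
  refine isLUB_pair_iff.2 ⟨le_top, le_top, fun z haz hxz => ?_⟩
  obtain ⟨j, hj⟩ := O.join_of_orth (O.compl z) m (O.antitone _ _ (hma.trans haz))
  obtain ⟨hzj, hmj, hj_le⟩ := isLUB_pair_iff.1 hj
  have hjL : j ∈ lowerBounds {O.compl x, O.compl y} := mem_lowerBounds_pair.2
    ⟨hj_le _ (O.antitone _ _ hxz) hmx, hj_le _ (O.antitone _ _ (hya.trans haz)) hmy⟩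
  have hzm : O.compl z ≤ m := hmMax j hjL hmj ▸ hzj
  exact (O.eq_top_of_compl_le (hzm.trans (hma.trans haz))).ge

theorem le_compl_of_mem_ompImpl {x y a : P} (ha : a ∈ ompImpl O x y) (hyx : y ≤ O.compl x) :
    a ≤ O.compl x := by
  obtain ⟨m, ⟨hmL, -⟩, hma⟩ := ha
  exact (isLUB_pair_iff.1 hma).2.2 _ hyx (mem_lowerBounds_pair.1 hmL).1

theorem eq_compl_of_isLUB_top {x a : P} (hxa : x ≤ O.compl a) (htop : IsLUB {a, x} ⊤) :
    x = O.compl a := by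
  refine O.orthomodular x (O.compl a) ⊤ x hxa (by rwa [O.involution]) ?_
  rw [O.compl_top]
  exact isLUB_pair_iff.2 ⟨bot_le, le_rfl, fun _ _ h => h⟩

theorem ompImpl_eq_of_compl_le {x y : P} (h : O.compl x ≤ O.compl y) :
    ompImpl O x y = {u | IsLUB {y, O.compl x} u} := by
  ext u
  constructor
  · rintro ⟨m, hm, hmu⟩
    rwa [eq_of_mem_maxElems_lowerBounds_pair hm h] at hmu
  · intro hu
    refine ⟨O.compl x, ⟨mem_lowerBounds_pair.2 ⟨le_rfl, h⟩, fun z hz hxz => ?_⟩, hu⟩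
    exact le_antisymm hxz (mem_lowerBounds_pair.1 hz).1

end OrthomodularPoset

theorem omp_impl_impl_isLUB_general {P : Type*} [PartialOrder P] [BoundedOrder P]
    (O : OrthomodularPoset P) (x y : P)
    (hxy : x ≤ O.compl y) :
    ∀ a ∈ ompImpl O x y, ∀ u ∈ ompImpl O a y,
      x ≤ u ∧ y ≤ u ∧ ∀ z : P, x ≤ z → y ≤ z → u ≤ z := by
  intro a ha u hu
  have hax : a ≤ O.compl x := O.le_compl_of_mem_ompImpl ha (O.le_compl_comm.1 hxy)
  have hxa : x = O.compl a :=
    O.eq_compl_of_isLUB_top (O.le_compl_comm.1 hax) (O.isLUB_top_of_mem_ompImpl ha)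
  rw [O.ompImpl_eq_of_compl_le (hxa ▸ hxy), ← hxa] at hu
  obtain ⟨hyu, hxu, hu_le⟩ := isLUB_pair_iff.1 hu
  exact ⟨hxu, hyu, fun z hxz hyz => hu_le z hyz hxz⟩

/-- If `x ⊥ y` then every `u ∈ (x → y) → y` is the least upper bound of
`{x, y}`: `x ≤ u`, `y ≤ u`, and every common upper bound `z` of `x` and `y`
satisfies `u ≤ z`. -/
theorem omp_impl_impl_isLUB {P : Type*} [PartialOrder P] [BoundedOrder P]
    (O : OrthomodularPoset P) (hfin : FiniteHeight P) (x y : P)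
    (hxy : x ≤ O.compl y) :
    ∀ a ∈ ompImpl O x y, ∀ u ∈ ompImpl O a y,
      x ≤ u ∧ y ≤ u ∧ ∀ z : P, x ≤ z → y ≤ z → u ≤ z :=
  omp_impl_impl_isLUB_general O x y hxy
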